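/- arXiv:2209.05399 — 2 statements merged into one kernel-verified Lean document; each statement's English description precedes it below -/
import Mathlib

section
/- Window representation of the subsampling estimator: Let n ∈ ℤ⁺ and let {ℓ_i}_{i=1}^n be positive integers with ℓ_i ≤ i such that t ↦ t − ℓ_t is monotonically increasing. For i, j ∈ {1,…,n} define I_n(i,j) := {t ∈ {1,…,n} : i, j ∈ {t − ℓ_t + 1, …, t}}, f_n(i) := max{t ∈ {1,…,n} : i ∈ {t − ℓ_t + 1, …, t}}, and b_n(i) := f_n(i) − i + 1. Then (i) |I_n(i,j)| = (b_n(i∧j) − |i−j|) · 1{|i−j| ≤ b_n(i∧j)} for all i, j; and (ii) for any real numbers X_1, …, X_n, the subsampling estimator σ̂²_{n,sub} = [Σ_{i=1}^n (Σ_{j=i−ℓ_i+1}^i X_j − ℓ_i X̄_n)²] / [Σ_{i=1}^n ℓ_i] equals the quadratic form n^{-1} Σ_{i=1}^n Σ_{j=1}^n W_sub(i,j)(X_i − X̄_n)(X_j − X̄_n), where W_sub(i,j) = (1 − (|i−j| + ℓ̄_n − b_n(i∧j))/ℓ̄_n) · 1{|i−j| ≤ b_n(i∧j)} and ℓ̄_n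 = n^{-1} Σ_{i=1}^n ℓ_i. -/
open MeasureTheory ProbabilityTheory Filter Finset Asymptotics
open scoped ENNReal NNReal Topology

noncomputable section

/-- A (two-sided) stationary causal process `X_i = g(…, ε_{i-1}, ε_i)` driven by an i.i.d.
innovation sequence `ε`, together with an independent copy `ε none` of the innovations used
to define the coupled process. -/
structure CausalProcess (Ω : Type*) [MeasurableSpace Ω] (μ : Measure Ω) where
  ε : Option ℤ → Ω → ℝ
  g : (ℕ → ℝ) → ℝ
  meas_g : Measurable g
  meas_ε : ∀ i, Measurable (ε i)
  indep : iIndepFun ε μ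
  ident : ∀ i j, μ.map (ε i) = μ.map (ε j)

namespace CausalProcess

variable {Ω : Type*} [MeasurableSpace Ω] {μ : Measure Ω} (P : CausalProcess Ω μ)

/-- `X_i = g(F_i)` where `F_i = (…, ε_{i-1}, ε_i)`. -/
def X (i : ℤ) : Ω → ℝ := fun ω => P.g fun k => P.ε (some (i - k)) ω

/-- The coupled version `X_{i,{0}}` of `X_i`, in which `ε_0` is replaced by the copy `ε'_0`. -/
def Xc (i : ℤ) : Ω → ℝ := fun ω =>
  P.g fun k => if i - (k : ℤ) = 0 then P.ε none ω else P.ε (some (i - k)) ω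

/-- Physical dependence measure `δ_{i,p} = ‖X_i − X_{i,{0}}‖_p`. -/
def delta (p : ℝ) (i : ℕ) : ℝ≥0∞ :=
  eLpNorm (fun ω => P.X i ω - P.Xc i ω) (ENNReal.ofReal p) μ

/-- `Δ_p = Σ_{i=0}^∞ δ_{i,p}`. -/
def Delta (p : ℝ) : ℝ≥0∞ := ∑' i : ℕ, P.delta p i

/-- The mean `μ = E(X_0)` of the stationary process. -/
def mean : ℝ := ∫ ω, P.X 0 ω ∂μ

/-- Autocovariance `γ_k = E{(X_0 − μ)(X_k − μ)}`. -/
def acov (k : ℤ) : ℝ := ∫ ω, (P.X 0 ω - P.mean) * (P.X k ω - P.mean) ∂μ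

/-- Long-run variance `σ² = Σ_{k∈ℤ} γ_k`. -/
def lrv : ℝ := ∑' k : ℤ, P.acov k

/-- Sample mean `X̄_n`. -/
def sampleMean (n : ℕ) (ω : Ω) : ℝ := (n : ℝ)⁻¹ * ∑ i ∈ Finset.Icc 1 n, P.X (i : ℤ) ω

/-- The quadratic-form long-run variance estimator `σ̂_n²(W)`. -/
def quadEst (W : ℕ → ℕ → ℕ → ℝ) (n : ℕ) (ω : Ω) : ℝ :=
  (n : ℝ)⁻¹ * ∑ i ∈ Finset.Icc 1 n, ∑ j ∈ Finset.Icc 1 n,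
    W n i j * (P.X (i : ℤ) ω - P.sampleMean n ω) * (P.X (j : ℤ) ω - P.sampleMean n ω)

/-- `w_{n,k} = n^{-1} Σ_{i=k+1}^n W_n(i, i−k)`. -/
def wnk (W : ℕ → ℕ → ℕ → ℝ) (n k : ℕ) : ℝ :=
  (n : ℝ)⁻¹ * ∑ i ∈ Finset.Icc (k + 1) n, W n i (i - k)

/-- Triangular-form estimator built from a sequence `Y` (used for the known-mean, the
`m`-dependent and the martingale-difference versions of the estimator). -/
def triEst (W : ℕ → ℕ → ℕ → ℝ) (Y : ℤ → Ω → ℝ) (n : ℕ) (ω : Ω) : ℝ :=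
  (n : ℝ)⁻¹ * ∑ i ∈ Finset.Icc 1 n, (Y (i : ℤ) ω) ^ 2
    + 2 * (n : ℝ)⁻¹ * ∑ i ∈ Finset.Icc 2 n, ∑ j ∈ Finset.Icc 1 (i - 1),
        W n i j * Y (i : ℤ) ω * Y (j : ℤ) ω

/-- Triangular-form estimator with estimated (sample) mean. -/
def triHat (W : ℕ → ℕ → ℕ → ℝ) (n : ℕ) (ω : Ω) : ℝ :=
  (n : ℝ)⁻¹ * ∑ i ∈ Finset.Icc 1 n, (P.X (i : ℤ) ω - P.sampleMean n ω) ^ 2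
    + 2 * (n : ℝ)⁻¹ * ∑ i ∈ Finset.Icc 2 n, ∑ j ∈ Finset.Icc 1 (i - 1),
        W n i j * (P.X (i : ℤ) ω - P.sampleMean n ω) * (P.X (j : ℤ) ω - P.sampleMean n ω)

/-- The σ-algebra `F_i = σ(ε_j : j ≤ i)`. -/
def filt (i : ℤ) : MeasurableSpace Ω :=
  MeasurableSpace.comap (fun ω (k : ℕ) => P.ε (some (i - k)) ω) inferInstance

/-- The coupled σ-algebra `F_{i,{0}}` in which `ε_0` is replaced by the copy `ε'_0`. -/
def filtC (i : ℤ) : MeasurableSpace Ω :=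
  MeasurableSpace.comap
    (fun ω (k : ℕ) => if i - (k : ℤ) = 0 then P.ε none ω else P.ε (some (i - k)) ω)
    inferInstance

/-- The σ-algebra `σ(ε_{i−m}, …, ε_i)`. -/
def recentSigma (m : ℕ) (i : ℤ) : MeasurableSpace Ω :=
  MeasurableSpace.comap (fun ω (k : Fin (m + 1)) => P.ε (some (i - (k : ℕ))) ω) inferInstance

/-- `X̃_i = E(X_i | ε_{i−m}, …, ε_i)`, the `m`-dependent approximation of the process. -/
def mdepX (m : ℕ) (i : ℤ) : Ω → ℝ := μ[P.X i | P.recentSigma m i]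

/-- `M_i = Σ_{h=0}^∞ E(X̃_{i+h} | F_i)`. -/
def martM (m : ℕ) (i : ℤ) : Ω → ℝ := fun ω => ∑' h : ℕ, (μ[P.mdepX m (i + h) | P.filt i]) ω

/-- `D_i = M_i − E(M_i | F_{i−1})`, the approximating martingale differences. -/
def martD (m : ℕ) (i : ℤ) : Ω → ℝ :=
  fun ω => P.martM m i ω - (μ[P.martM m i | P.filt (i - 1)]) ω

/-- Predictive dependence measure `ω_{j,p} = ‖E(X_j|F_0) − E(X_j|F_{0,{0}})‖_p`. -/
def omegaDep (p : ℝ) (j : ℕ) : ℝ≥0∞ :=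
  eLpNorm (fun ω => (μ[P.X (j : ℤ) | P.filt 0]) ω - (μ[P.X (j : ℤ) | P.filtC 0]) ω)
    (ENNReal.ofReal p) μ

/-- `v_q = Σ_{k∈ℤ} |k|^q γ_k`. -/
def vq (q : ℕ) : ℝ := ∑' k : ℤ, (|k| : ℝ) ^ q * P.acov k

/-- Variance of a real statistic. -/
def varInt (f : Ω → ℝ) : ℝ := ∫ ω, (f ω - ∫ ω', f ω' ∂μ) ^ 2 ∂μ

/-- `Υ_{m,p} = (Σ_{i=m}^∞ δ_{i,p}²)^{1/2}`. -/
def Upsilon (p : ℝ) (m : ℕ) : ℝ≥0∞ := (∑' i : ℕ, (P.delta p (m + i)) ^ 2) ^ (1 / 2 : ℝ)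

/-- `d_{m,p} = Σ_{i=0}^∞ min(δ_{i,p}, Υ_{m+1,p})`. -/
def dTrunc (p : ℝ) (m : ℕ) : ℝ≥0∞ := ∑' i : ℕ, min (P.delta p i) (P.Upsilon p (m + 1))

/-- The exponent conditions (a)/(b) of Definition winLASER, with `α' = min(α/2, 2)`;
in case (b), `q̃` is the order of serial dependence in Assumption `u_{q̃} < ∞`. -/
def ExponentCond (α : ℝ) (q : ℕ) (ψ θ : ℝ) : Prop :=
  (0 < ψ ∧ ψ ≤ θ ∧ θ < min (2 - 2 / min (α / 2) 2) (1 / (1 + (q : ℝ))))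
    ∨ (0 < ψ ∧ ψ < min (2 - 2 / min (α / 2) 2) (1 / (1 + (q : ℝ))) ∧
        ∃ qt : ℕ, 0 < qt ∧ Summable (fun k : ℤ => (|k| : ℝ) ^ qt * |P.acov k|) ∧
          max (ψ + (ψ - 2 + 2 / min (α / 2) 2) / (2 * (q : ℝ)))
              (((q : ℝ) - (qt : ℝ)) * ψ / (q : ℝ)) < θ ∧ θ < ψ)

end CausalProcess

namespace LASER

/-- Intended subsampling parameter `s_n = min(⌊Ψ n^ψ⌋, n−1)`. -/
def sN (Ψ ψ : ℝ) (n : ℕ) : ℕ := min ⌊Ψ * (n : ℝ) ^ ψ⌋₊ (n - 1)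

/-- Tapering parameter `t_n = min(⌈Θ n^θ⌉, n)`. -/
def tN (Θ θ : ℝ) (n : ℕ) : ℕ := min ⌈Θ * (n : ℝ) ^ θ⌉₊ n

/-- Ramped (effective) subsampling parameter `s'_n`. -/
def rampS (Ψ ψ φ : ℝ) : ℕ → ℕ
  | 0 => 0
  | n + 1 =>
      if sN Ψ ψ n ≤ rampS Ψ ψ φ n + 1 ∧ ((rampS Ψ ψ φ n : ℝ) + 1 < φ * (sN Ψ ψ n : ℝ)) then
        rampS Ψ ψ φ n + 1
      else sN Ψ ψ (n + 1)

/-- The LASER(q,φ) window `W(i,j) = (1 − |i−j|^q/t_n^q) 1{|i−j| ≤ s'_{i∨j}}`. -/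
def W (q : ℕ) (Ψ ψ φ Θ θ : ℝ) (n i j : ℕ) : ℝ :=
  if max i j - min i j ≤ rampS Ψ ψ φ (max i j) then
    1 - ((max i j - min i j : ℕ) : ℝ) ^ q / ((tN Θ θ n : ℝ)) ^ q
  else 0

/-- The constant `𝒱_{ψ,Ψ,θ,Θ,q,φ}` in the exact variance rate of LASER(q,φ). -/
def Vconst (ψ Ψ θ Θ : ℝ) (q : ℕ) (φ : ℝ) : ℝ :=
  if 1 < φ then
    (if ψ ≤ θ then 2 * Ψ * (φ + 1) / (ψ + 1) else 0)
      - (if ψ = θ then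
          8 * Ψ ^ (q + 1) / Θ ^ q * (φ ^ (q + 2) - 1)
            / ((φ - 1) * ((q : ℝ) + 1) * ((q : ℝ) + 2) * (ψ * q + ψ + 1)) else 0)
      + (if θ ≤ ψ then
          2 * Ψ ^ (2 * q + 1) / Θ ^ (2 * q) * (φ ^ (2 * q + 2) - 1)
            / ((φ - 1) * ((q : ℝ) + 1) * (2 * (q : ℝ) + 1) * (2 * ψ * q + ψ + 1)) else 0)
  else
    (if ψ ≤ θ then 4 * Ψ / (ψ + 1) else 0)
      - (if ψ = θ then
          8 * Ψ ^ (q + 1) / Θ ^ q / (((q : ℝ) + 1) * (ψ * q + ψ + 1)) else 0)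
      + (if θ ≤ ψ then
          4 * Ψ ^ (2 * q + 1) / Θ ^ (2 * q) / ((2 * (q : ℝ) + 1) * (2 * ψ * q + ψ + 1)) else 0)

/-- Number of ramps `ν_k` in the `k`-th block (case `φ > 1`). -/
def blockNu (Ψ ψ φ : ℝ) (k : ℕ) : ℕ :=
  ⌈(1 / ((φ - 1) * ψ)) * (1 / Ψ) ^ (1 / ψ) * (k : ℝ) ^ (1 / ψ - 2)⌉₊

/-- Width `ϖ_k` of a ramp in the `k`-th block. -/
def blockW (φ : ℝ) (k : ℕ) : ℕ := ⌈(φ - 1) * (k : ℝ)⌉₊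

/-- Starting point `η_k` of the `k`-th block. -/
def blockEta (Ψ ψ φ : ℝ) (k : ℕ) : ℕ :=
  if 1 < φ then 1 + ∑ h ∈ Finset.Ico 1 k, blockW φ h * blockNu Ψ ψ φ h
  else ⌈((k : ℝ) / Ψ) ^ (1 / ψ)⌉₊

end LASER

/-- `G_{1,n}` of Assumption 2. -/
def winG1 (W : ℕ → ℕ → ℕ → ℝ) (n : ℕ) : ℝ :=
  ⨆ i ∈ Finset.Icc 1 n, ∑ j ∈ Finset.Icc 1 n, (|W n i j| + (W n i j) ^ 2)

/-- `G_{2,n}` of Assumption 2, with `αp = α' = min(α/2, 2)`. -/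
def winG2 (W : ℕ → ℕ → ℕ → ℝ) (αp : ℝ) (n : ℕ) : ℝ :=
  (⨆ i ∈ Finset.Icc 1 n, ⨆ j ∈ Finset.Icc 1 n, |W n i j|)
    + ⨆ i ∈ Finset.Icc 1 n,
        (∑ j ∈ Finset.Icc 2 n, |W n i j - W n i (j - 1)| ^ αp) ^ (1 / αp)

/-- `G_{3,n}`. -/
def winG3 (W : ℕ → ℕ → ℕ → ℝ) (n : ℕ) : ℝ :=
  ∑ i ∈ Finset.Icc 2 n, (∑ j ∈ Finset.Icc 1 (i - 1), W n i j) ^ 2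
    + ∑ j ∈ Finset.Icc 1 (n - 1), (∑ i ∈ Finset.Icc (j + 1) n, W n i j) ^ 2

/-- `G_{4,n}`. -/
def winG4 (W : ℕ → ℕ → ℕ → ℝ) (n : ℕ) : ℝ :=
  |∑ i ∈ Finset.Icc 2 n, ∑ j ∈ Finset.Icc 1 (i - 1), W n i j|

/-- `G_{5,n}`. -/
def winG5 (W : ℕ → ℕ → ℕ → ℝ) (n : ℕ) : ℝ :=
  ⨆ i ∈ Finset.Icc 1 n, ∑ j ∈ Finset.Icc 1 n, ((W n i j) ^ 2 + (W n j i) ^ 2)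

/-- `G_{6,n}`, with `αp = α' = min(α/2, 2)`. -/
def winG6 (W : ℕ → ℕ → ℕ → ℝ) (αp : ℝ) (n : ℕ) : ℝ :=
  (⨆ i ∈ Finset.Icc 1 n, ⨆ j ∈ Finset.Icc 1 n, |W n i j|)
    + ⨆ i ∈ Finset.Icc 1 n,
        (∑ j ∈ Finset.Icc 2 n,
          (|W n j i - W n (j - 1) i| ^ αp + |W n i j - W n i (j - 1)| ^ αp)) ^ (1 / αp)

/-- Assumption 2 (summability of window). -/
def WindowSummable (W : ℕ → ℕ → ℕ → ℝ) (α : ℝ) : Prop :=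
  ((fun n => winG1 W n) =o[Filter.atTop] fun n => (n : ℝ) ^ (2 - 2 / min (α / 2) 2))
    ∧ ∃ c ∈ Set.Ioo (0 : ℝ) (1 - 1 / min (α / 2) 2),
        (fun n => winG2 W (min (α / 2) 2) n) =o[Filter.atTop] fun n => (n : ℝ) ^ c

/-- Symmetry of the window on `{1,…,n}²`. -/
def WindowSymm (W : ℕ → ℕ → ℕ → ℝ) : Prop :=
  ∀ n, ∀ i ∈ Finset.Icc 1 n, ∀ j ∈ Finset.Icc 1 n, W n i j = W n j i

/-- `f_n(i) = max{t ∈ {1,…,n} : i ∈ {t − ℓ_t + 1, …, t}}`. -/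
def fEnd (ℓ : ℕ → ℕ) (n i : ℕ) : ℕ :=
  ((Finset.Icc 1 n).filter fun t => t + 1 ≤ i + ℓ t ∧ i ≤ t).sup id

/-- `b_n(i) = f_n(i) − i + 1`. -/
def bEnd (ℓ : ℕ → ℕ) (n i : ℕ) : ℕ := fEnd ℓ n i - i + 1

/-- `ℓ̄_n = n^{-1} Σ_{i=1}^n ℓ_i`. -/
def ellBar (ℓ : ℕ → ℕ) (n : ℕ) : ℝ := (n : ℝ)⁻¹ * ∑ i ∈ Finset.Icc 1 n, (ℓ i : ℝ)

/-- The subsampling window `W_sub`. -/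
def Wsub (ℓ : ℕ → ℕ) (n i j : ℕ) : ℝ :=
  if max i j - min i j ≤ bEnd ℓ n (min i j) then
    1 - (((max i j - min i j : ℕ) : ℝ) + ellBar ℓ n - (bEnd ℓ n (min i j) : ℝ)) / ellBar ℓ n
  else 0

/-- The parallelogrammatic (PSR) window `W_PSR`. -/
def Wpsr (ℓ : ℕ → ℕ) (n i j : ℕ) : ℝ :=
  if max i j - min i j ≤ ℓ (max i j) then
    1 - (((max i j - min i j : ℕ) : ℝ) + ellBar ℓ n - (ℓ (max i j) : ℝ)) / ellBar ℓ n
  else 0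

/-! Writing `Y_j = X_j - X̄_n`, the `i`-th term of the numerator is `(∑_{j ∈ window i} Y_j)²`, and
expanding the squares gives `∑_{j,k} |I_n(j,k)| Y_j Y_k`. Since `t ↦ t - ℓ_t` is monotone, the `t`
whose window contains `i` form the interval `[i, f_n(i)]`; hence `I_n(i,j) = [j, f_n(i)]` for
`i ≤ j`, which is (i), and dividing by `∑ ℓ_i = n ℓ̄_n` turns `|I_n(i,j)| / ℓ̄_n` into `W_sub(i,j)`. -/

theorem Finset.sum_sq_sum_filter {ι α R : Type*} [CommSemiring R] (s : Finset ι) (u : Finset α)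
    (p : ι → α → Prop) [∀ i, DecidablePred (p i)] (y : α → R) :
    ∑ i ∈ s, (∑ j ∈ u with p i j, y j) ^ 2
      = ∑ j ∈ u, ∑ k ∈ u, (#{i ∈ s | p i j ∧ p i k} : R) * (y j * y k) := by
  simp only [sum_filter, sq, sum_mul_sum, ite_zero_mul_ite_zero]
  rw [sum_comm]
  refine sum_congr rfl fun j _ => ?_
  rw [sum_comm]
  refine sum_congr rfl fun k _ => ?_
  rw [← sum_filter, sum_const, nsmul_eq_mul]

theorem natCast_mul_ellBar (ℓ : ℕ → ℕ) (n : ℕ) :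
    (n : ℝ) * ellBar ℓ n = ∑ i ∈ Icc 1 n, (ℓ i : ℝ) := by
  rcases n.eq_zero_or_pos with rfl | hn
  · simp
  · rw [ellBar, ← mul_assoc, mul_inv_cancel₀ (by positivity), one_mul]

section Windows

variable {ℓ : ℕ → ℕ} {n i j : ℕ}

theorem filter_window_eq_Icc (hle : ℓ i ≤ i) (hin : i ≤ n) :
    {j ∈ Icc 1 n | i + 1 ≤ j + ℓ i ∧ j ≤ i} = Icc (i + 1 - ℓ i) i := by
  ext j
  simp only [mem_filter, mem_Icc]
  omega

theorem sum_window_sub_mul_eq_sum_sub (hle : ℓ i ≤ i) (x : ℕ → ℝ) (c : ℝ) :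
    ∑ j ∈ Icc (i + 1 - ℓ i) i, x j - ℓ i * c
      = ∑ j ∈ Icc (i + 1 - ℓ i) i, (x j - c) := by
  rw [sum_sub_distrib, sum_const, Nat.card_Icc, nsmul_eq_mul,
    show i + 1 - (i + 1 - ℓ i) = ℓ i by omega]

theorem self_le_fEnd (hpos : 1 ≤ ℓ i) (hi : 1 ≤ i) (hin : i ≤ n) : i ≤ fEnd ℓ n i := by
  apply le_sup (f := id)
  simp only [mem_filter, mem_Icc]
  omega

theorem filter_window_contains_eq_Icc (hpos : ∀ i, 1 ≤ i → 1 ≤ ℓ i)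
    (hmono : Monotone fun t => t - ℓ t) (hi : 1 ≤ i) (hin : i ≤ n) :
    {t ∈ Icc 1 n | t + 1 ≤ i + ℓ t ∧ i ≤ t} = Icc i (fEnd ℓ n i) := by
  have hne : ({t ∈ Icc 1 n | t + 1 ≤ i + ℓ t ∧ i ≤ t}).Nonempty :=
    ⟨i, by simp only [mem_filter, mem_Icc]; have := hpos i hi; omega⟩
  obtain ⟨f, hf, hfeq⟩ := exists_mem_eq_sup _ hne id
  have hfEnd : fEnd ℓ n i = f := hfeq
  ext t
  rw [mem_Icc, hfEnd]
  constructor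
  · intro ht
    exact ⟨(mem_filter.1 ht).2.2, (le_sup (f := id) ht).trans_eq hfeq⟩
  · rintro ⟨hit, htf⟩
    have : t - ℓ t ≤ f - ℓ f := hmono htf
    simp only [mem_filter, mem_Icc] at hf ⊢
    omega

theorem card_filter_windows_contain_of_le (hpos : ∀ i, 1 ≤ i → 1 ≤ ℓ i)
    (hmono : Monotone fun t => t - ℓ t) (hi : 1 ≤ i) (hij : i ≤ j) (hjn : j ≤ n) :
    #{t ∈ Icc 1 n | (t + 1 ≤ i + ℓ t ∧ i ≤ t) ∧ (t + 1 ≤ j + ℓ t ∧ j ≤ t)}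
      = fEnd ℓ n i + 1 - j := by
  have hwin := filter_window_contains_eq_Icc hpos hmono hi (hij.trans hjn)
  have hboth :
      {t ∈ Icc 1 n | (t + 1 ≤ i + ℓ t ∧ i ≤ t) ∧ (t + 1 ≤ j + ℓ t ∧ j ≤ t)} = Icc j (fEnd ℓ n i) := by
    ext t
    have := congrArg (t ∈ ·) hwin
    simp only [mem_filter, mem_Icc, eq_iff_iff] at this ⊢
    omega
  rw [hboth, Nat.card_Icc]

theorem card_filter_windows_contain (hpos : ∀ i, 1 ≤ i → 1 ≤ ℓ i)
    (hmono : Monotone fun t => t - ℓ t) (hi : i ∈ Icc 1 n) (hj : j ∈ Icc 1 n) :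
    #{t ∈ Icc 1 n | (t + 1 ≤ i + ℓ t ∧ i ≤ t) ∧ (t + 1 ≤ j + ℓ t ∧ j ≤ t)}
      = if max i j - min i j ≤ bEnd ℓ n (min i j)
        then bEnd ℓ n (min i j) - (max i j - min i j) else 0 := by
  rw [mem_Icc] at hi hj
  rcases le_total i j with hij | hji
  · rw [card_filter_windows_contain_of_le hpos hmono hi.1 hij hj.2, max_eq_right hij,
      min_eq_left hij, bEnd]
    have := self_le_fEnd (hpos i hi.1) hi.1 hi.2
    split_ifs <;> omega
  · rw [filter_congr fun _ _ => and_comm,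
      card_filter_windows_contain_of_le hpos hmono hj.1 hji hi.2, max_eq_left hji,
      min_eq_right hji, bEnd]
    have := self_le_fEnd (hpos j hj.1) hj.1 hj.2
    split_ifs <;> omega

theorem ellBar_pos (hpos : ∀ i, 1 ≤ i → 1 ≤ ℓ i) (hn : 1 ≤ n) : 0 < ellBar ℓ n := by
  have hsum : 0 < ∑ i ∈ Icc 1 n, (ℓ i : ℝ) :=
    sum_pos (fun i hi => by exact_mod_cast hpos i (mem_Icc.1 hi).1) ⟨1, by simp [hn]⟩
  rw [ellBar]
  positivity

theorem Wsub_eq_card_div_ellBar (hpos : ∀ i, 1 ≤ i → 1 ≤ ℓ i)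
    (hmono : Monotone fun t => t - ℓ t) (hi : i ∈ Icc 1 n) (hj : j ∈ Icc 1 n) :
    Wsub ℓ n i j = #{t ∈ Icc 1 n | (t + 1 ≤ i + ℓ t ∧ i ≤ t) ∧ (t + 1 ≤ j + ℓ t ∧ j ≤ t)}
      / ellBar ℓ n := by
  have hbar := (ellBar_pos hpos ((mem_Icc.1 hi).1.trans (mem_Icc.1 hi).2)).ne'
  rw [card_filter_windows_contain hpos hmono hi hj, Wsub]
  split_ifs with h
  · rw [Nat.cast_sub h]
    field_simp
    ring
  · simp

end Windows

theorem subsampling_window_representation_general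
    (n : ℕ) (ℓ : ℕ → ℕ)
    (hpos : ∀ i, 1 ≤ i → 1 ≤ ℓ i) (hle : ∀ i, ℓ i ≤ i)
    (hmono : Monotone fun t => t - ℓ t)
    (X : ℕ → ℝ) :
    (∀ i ∈ Finset.Icc 1 n, ∀ j ∈ Finset.Icc 1 n,
      ((Finset.Icc 1 n).filter fun t =>
          (t + 1 ≤ i + ℓ t ∧ i ≤ t) ∧ (t + 1 ≤ j + ℓ t ∧ j ≤ t)).card
        = if max i j - min i j ≤ bEnd ℓ n (min i j)
          then bEnd ℓ n (min i j) - (max i j - min i j) else 0) ∧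
    ((∑ i ∈ Finset.Icc 1 n, (∑ j ∈ Finset.Icc (i + 1 - ℓ i) i, X j
          - (ℓ i : ℝ) * ((n : ℝ)⁻¹ * ∑ l ∈ Finset.Icc 1 n, X l)) ^ 2)
        / (∑ i ∈ Finset.Icc 1 n, (ℓ i : ℝ))
      = (n : ℝ)⁻¹ * ∑ i ∈ Finset.Icc 1 n, ∑ j ∈ Finset.Icc 1 n,
          Wsub ℓ n i j * (X i - (n : ℝ)⁻¹ * ∑ l ∈ Finset.Icc 1 n, X l)
            * (X j - (n : ℝ)⁻¹ * ∑ l ∈ Finset.Icc 1 n, X l)) := by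
  refine ⟨fun i hi j hj => card_filter_windows_contain hpos hmono hi hj, ?_⟩
  set Y := fun j => X j - (n : ℝ)⁻¹ * ∑ l ∈ Icc 1 n, X l
  have hnum : ∀ i ∈ Icc 1 n, ∑ j ∈ Icc (i + 1 - ℓ i) i, X j
        - (ℓ i : ℝ) * ((n : ℝ)⁻¹ * ∑ l ∈ Icc 1 n, X l)
      = ∑ j ∈ Icc 1 n with i + 1 ≤ j + ℓ i ∧ j ≤ i, Y j := fun i hi => by
    rw [filter_window_eq_Icc (hle i) (mem_Icc.1 hi).2, sum_window_sub_mul_eq_sum_sub (hle i)]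
  rw [sum_congr rfl fun i hi => by rw [hnum i hi], Finset.sum_sq_sum_filter,
    ← natCast_mul_ellBar, mul_comm, ← div_div, div_eq_inv_mul]
  congr 1
  rw [sum_div]
  refine sum_congr rfl fun i hi => ?_
  rw [sum_div]
  refine sum_congr rfl fun j hj => ?_
  rw [Wsub_eq_card_div_ellBar hpos hmono hi hj]
  ring

/-- window representation of the subsampling estimator. -/
theorem subsampling_window_representation
    (n : ℕ) (hn : 1 ≤ n) (ℓ : ℕ → ℕ)
    (hpos : ∀ i, 1 ≤ i → 1 ≤ ℓ i) (hle : ∀ i, ℓ i ≤ i)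
    (hmono : Monotone fun t => t - ℓ t)
    (X : ℕ → ℝ) :
    (∀ i ∈ Finset.Icc 1 n, ∀ j ∈ Finset.Icc 1 n,
      ((Finset.Icc 1 n).filter fun t =>
          (t + 1 ≤ i + ℓ t ∧ i ≤ t) ∧ (t + 1 ≤ j + ℓ t ∧ j ≤ t)).card
        = if max i j - min i j ≤ bEnd ℓ n (min i j)
          then bEnd ℓ n (min i j) - (max i j - min i j) else 0) ∧
    ((∑ i ∈ Finset.Icc 1 n, (∑ j ∈ Finset.Icc (i + 1 - ℓ i) i, X j
          - (ℓ i : ℝ) * ((n : ℝ)⁻¹ * ∑ l ∈ Finset.Icc 1 n, X l)) ^ 2)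
        / (∑ i ∈ Finset.Icc 1 n, (ℓ i : ℝ))
      = (n : ℝ)⁻¹ * ∑ i ∈ Finset.Icc 1 n, ∑ j ∈ Finset.Icc 1 n,
          Wsub ℓ n i j * (X i - (n : ℝ)⁻¹ * ∑ l ∈ Finset.Icc 1 n, X l)
            * (X j - (n : ℝ)⁻¹ * ∑ l ∈ Finset.Icc 1 n, X l)) :=
  subsampling_window_representation_general n ℓ hpos hle hmono X
end
end

section
/- Exteriorization identity for polynomial tapers (core of the O(1)-time update proposition): Let {X_i} be a real sequence, r ∈ ℕ₀, and let {s_i ∈ ℕ₀} satisfy s_i ≤ i − 1. Define K_{i,r} := Σ_{k=0}^{s_i} (2 − 1{k=0}) k^r X_{i−k} and P_{i,u} := Σ_{j=1}^i j^u X_j (with P_{0,u} = 0). Then for every i ∈ ℤ⁺: K_{i,r} = 0^r X_i + 2 Σ_{u=0}^r C(r,u) i^{r−u} (−1)^u ( P_{i−1,u} − P_{i−s_i−1,u} ), where C(r,u) is the binomial coefficient and 0^r is interpreted as 1 when r = 0 and 0 when r ≥ 1. -/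
open MeasureTheory ProbabilityTheory Filter Finset Asymptotics
open scoped ENNReal NNReal Topology

noncomputable section

/-- `P_{i,u} = Σ_{j=1}^i j^u X_j`. -/
def Pcomp (X : ℕ → ℝ) (i u : ℕ) : ℝ := ∑ j ∈ Finset.Icc 1 i, (j : ℝ) ^ u * X j

/-- `K_{i,r} = Σ_{k=0}^{s_i} (2 − 1{k=0}) k^r X_{i−k}`. -/
def Kgen (X : ℕ → ℝ) (s : ℕ → ℕ) (i r : ℕ) : ℝ :=
  ∑ k ∈ Finset.Icc 0 (s i), ((2 : ℝ) - if k = 0 then 1 else 0) * (k : ℝ) ^ r * X (i - k)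

/-! Substituting `j = i - k` turns `Σ_{k=1}^{s_i} k^r X_{i-k}` into `Σ_j (i - j)^r X_j` over
`j ∈ (i - s_i - 1, i - 1]`. Expanding `(i - j)^r` by the binomial theorem moves every power of `i`
out of the sum over `j`, and what is left are the prefix-sum differences
`P_{i-1,u} - P_{i-s_i-1,u}`. -/

theorem sub_pow_eq_sum_choose {R : Type*} [CommRing R] (a b : R) (r : ℕ) :
    (a - b) ^ r = ∑ u ∈ range (r + 1), (r.choose u : R) * a ^ (r - u) * (-1) ^ u * b ^ u := by
  rw [sub_eq_neg_add, add_pow]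
  refine sum_congr rfl fun u _ => ?_
  rw [neg_pow]
  ring

theorem sum_sub_pow_mul_eq_sum_choose {ι R : Type*} [CommRing R] (S : Finset ι) (a : R)
    (b w : ι → R) (r : ℕ) :
    ∑ j ∈ S, (a - b j) ^ r * w j
      = ∑ u ∈ range (r + 1), (r.choose u : R) * a ^ (r - u) * (-1) ^ u
          * ∑ j ∈ S, b j ^ u * w j := by
  simp_rw [sub_pow_eq_sum_choose, sum_mul, mul_sum]
  rw [sum_comm]
  refine sum_congr rfl fun u _ => sum_congr rfl fun j _ => ?_
  ring

theorem sum_Icc_one_sub_eq_sum_Ioc {M : Type*} [AddCommMonoid M] (f : ℕ → M) {s i : ℕ}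
    (h : s < i) : ∑ k ∈ Icc 1 s, f (i - k) = ∑ j ∈ Ioc (i - s - 1) (i - 1), f j := by
  refine sum_nbij' (i - ·) (i - ·) ?_ ?_ ?_ ?_ fun _ _ => rfl <;>
    intro k hk <;> simp only [mem_Icc, mem_Ioc] at hk ⊢ <;> omega

theorem Kgen_eq_zero_pow_mul_add (X : ℕ → ℝ) (s : ℕ → ℕ) (i r : ℕ) :
    Kgen X s i r = (0 : ℝ) ^ r * X i + 2 * ∑ k ∈ Icc 1 (s i), (k : ℝ) ^ r * X (i - k) := by
  rw [Kgen, ← insert_Icc_add_one_left_eq_Icc (Nat.zero_le _), sum_insert (by simp), mul_sum]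
  congr 1
  · norm_num
  · refine sum_congr rfl fun k hk => ?_
    rw [if_neg (by simp only [mem_Icc] at hk; omega)]
    ring

theorem Pcomp_sub_Pcomp_eq_sum_Ioc (X : ℕ → ℝ) (u : ℕ) {m n : ℕ} (h : m ≤ n) :
    Pcomp X n u - Pcomp X m u = ∑ j ∈ Ioc m n, (j : ℝ) ^ u * X j := by
  have h_Ioc (k : ℕ) : Icc 1 k = Ioc 0 k := Icc_add_one_left_eq_Ioc 0 k
  rw [Pcomp, Pcomp, h_Ioc, h_Ioc,
    ← sum_Ioc_consecutive _ (Nat.zero_le m) h, add_sub_cancel_left]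

/-- exteriorization identity for polynomial tapers. -/
theorem exteriorization_identity
    (X : ℕ → ℝ) (s : ℕ → ℕ) (hub : ∀ i, 1 ≤ i → s i ≤ i - 1) (r : ℕ)
    (i : ℕ) (hi : 1 ≤ i) :
    Kgen X s i r = (0 : ℝ) ^ r * X i
      + 2 * ∑ u ∈ Finset.range (r + 1),
          (r.choose u : ℝ) * (i : ℝ) ^ (r - u) * (-1 : ℝ) ^ u
            * (Pcomp X (i - 1) u - Pcomp X (i - s i - 1) u) := by
  have hs : s i < i := by have := hub i hi; omega
  have h_reindex : ∑ k ∈ Icc 1 (s i), (k : ℝ) ^ r * X (i - k)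
      = ∑ j ∈ Ioc (i - s i - 1) (i - 1), ((i : ℝ) - j) ^ r * X j := by
    rw [← sum_Icc_one_sub_eq_sum_Ioc (fun j => ((i : ℝ) - j) ^ r * X j) hs]
    refine sum_congr rfl fun k hk => ?_
    rw [Nat.cast_sub (by simp only [mem_Icc] at hk; omega), sub_sub_cancel]
  rw [Kgen_eq_zero_pow_mul_add, h_reindex, sum_sub_pow_mul_eq_sum_choose]
  simp_rw [Pcomp_sub_Pcomp_eq_sum_Ioc X _ (show i - s i - 1 ≤ i - 1 by omega)]
end
end
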